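/- Let k be odd and ∂_k as above with ∂_k^2 = 0 on the 2^k-dimensional Z/2 space CF(k). Then dim ker ∂_{k+2} = 2·2^k + dim(ker ∂_k) - dim(im ∂_k) = (1/2)·2^{k+2} + dim of homology of ∂_k. -/
import Mathlib


open Finset

abbrev SV (k : ℕ) := Fin k → Bool
abbrev CFR (R : Type) [CommRing R] (k : ℕ) := SV k → R
abbrev CF (k : ℕ) := CFR (ZMod 2) k

def sflip {k : ℕ} (i : Fin k) (ε : SV k) : SV k := Function.update ε i (!ε i)
def flipAll {k : ℕ} (ε : SV k) : SV k := fun j => !ε j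

def bdryR (R : Type) [CommRing R] (k : ℕ) : CFR R k →ₗ[R] CFR R k where
  toFun x := fun ε => (∑ i : Fin k, x (sflip i ε)) + x (flipAll ε)
  map_add' x y := by funext ε; simp only [Pi.add_apply, Finset.sum_add_distrib]; ring
  map_smul' c x := by
    funext ε
    show (∑ i, (c • x) (sflip i ε)) + (c • x) (flipAll ε)
        = c * ((∑ i, x (sflip i ε)) + x (flipAll ε))
    simp only [Pi.smul_apply, smul_eq_mul]
    rw [mul_add, Finset.mul_sum]

abbrev bdry (k : ℕ) : CF k →ₗ[ZMod 2] CF k := bdryR (ZMod 2) k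

def eta (k : ℕ) : CF k →ₗ[ZMod 2] CF k where
  toFun x := fun ε => x (flipAll ε)
  map_add' x y := by funext ε; simp
  map_smul' c x := by funext ε; simp

def pre (k : ℕ) (a b : Bool) : CF k →ₗ[ZMod 2] CF (k+2) where
  toFun x := fun ε => if ε 0 = a ∧ ε 1 = b then x (fun i => ε i.succ.succ) else 0
  map_add' x y := by funext ε; by_cases h : ε 0 = a ∧ ε 1 = b <;> simp [h]
  map_smul' c x := by funext ε; by_cases h : ε 0 = a ∧ ε 1 = b <;> simp [h]

def proj (k : ℕ) : CF (k+2) →ₗ[ZMod 2] CF k where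
  toFun x := fun δ => ∑ a : Bool, ∑ b : Bool, x (Fin.cons a (Fin.cons b δ))
  map_add' x y := by funext δ; simp [Finset.sum_add_distrib]
  map_smul' c x := by funext δ; simp [Finset.mul_sum]; ring

noncomputable def homDim (k : ℕ) : ℕ :=
  Module.finrank (ZMod 2)
    (LinearMap.ker (bdry k) ⧸
      Submodule.comap (LinearMap.ker (bdry k)).subtype (LinearMap.range (bdry k)))

variable {k : ℕ}

lemma sflip_apply (i : Fin k) (ε : SV k) (l : Fin k) :
    sflip i ε l = if l = i then !ε i else ε l := Function.update_apply ε i (!ε i) l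

lemma flipAll_flipAll (ε : SV k) : flipAll (flipAll ε) = ε := by
  funext j; simp [flipAll]

lemma flipAll_sflip (i : Fin k) (ε : SV k) : flipAll (sflip i ε) = sflip i (flipAll ε) := by
  funext j; simp only [flipAll, sflip_apply]
  by_cases h : j = i <;> simp [h]

lemma sflip_sflip (i j : Fin k) (ε : SV k) : sflip i (sflip j ε) = sflip j (sflip i ε) := by
  funext l
  simp only [sflip_apply]
  by_cases h1 : l = i <;> by_cases h2 : l = j <;> by_cases h3 : i = j <;> simp_all

lemma sflip_sflip_self (i : Fin k) (ε : SV k) : sflip i (sflip i ε) = ε := by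
  funext l; simp only [sflip_apply]
  by_cases h : l = i <;> simp [h]

lemma eta_eta (x : CF k) : eta k (eta k x) = x := by
  funext ε; show x (flipAll (flipAll ε)) = x ε; rw [flipAll_flipAll]

lemma bdry_apply (x : CF k) (ε : SV k) :
    bdry k x ε = (∑ i : Fin k, x (sflip i ε)) + x (flipAll ε) := rfl

lemma eta_apply (x : CF k) (ε : SV k) : eta k x ε = x (flipAll ε) := rfl

lemma bdry_eta (x : CF k) : bdry k (eta k x) = eta k (bdry k x) := by
  funext ε
  simp only [bdry_apply, eta_apply]
  rw [flipAll_flipAll]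
  congr 1
  exact Finset.sum_congr rfl fun i _ => by rw [flipAll_sflip]
lemma odd_cast (hk : Odd k) : (k : ZMod 2) = 1 := by
  obtain ⟨m, rfl⟩ := hk
  push_cast
  rw [show (2 : ZMod 2) = 0 by decide]
  ring

lemma bdry_bdry (hk : Odd k) (x : CF k) : bdry k (bdry k x) = 0 := by
  funext ε
  simp only [bdry_apply, Pi.zero_apply]
  simp only [bdry_apply, flipAll_sflip, flipAll_flipAll, Finset.sum_add_distrib]
  have hdouble : (∑ i : Fin k, ∑ j : Fin k, x (sflip j (sflip i ε))) = x ε := by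
    rw [← Finset.sum_product']
    rw [← Finset.diag_union_offDiag, Finset.sum_union (Finset.disjoint_diag_offDiag _),
      Finset.sum_diag]
    have hd : (∑ i : Fin k, x (sflip i (sflip i ε))) = x ε := by
      simp only [sflip_sflip_self]
      rw [Finset.sum_const, Finset.card_univ, Fintype.card_fin, nsmul_eq_mul, odd_cast hk,
        one_mul]
    have ho : (∑ p ∈ Finset.univ.offDiag, x (sflip p.2 (sflip p.1 ε))) = 0 := by
      apply Finset.sum_involution (fun p _ => (p.2, p.1))
      · intro p _
        show x (sflip p.2 (sflip p.1 ε)) + x (sflip p.1 (sflip p.2 ε)) = 0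
        rw [sflip_sflip]
        exact CharTwo.add_self_eq_zero _
      · intro p hp _
        simp only [Finset.mem_offDiag] at hp
        intro hcon
        exact hp.2.2 ((congrArg Prod.fst hcon).symm)
      · intro p hp
        simp only [Finset.mem_offDiag] at hp ⊢
        exact ⟨hp.2.1, hp.1, hp.2.2.symm⟩
      · intro p _; rfl
    rw [hd, ho, add_zero]
  rw [hdouble]
  exact (by decide : ∀ a s : ZMod 2, a + s + (s + a) = 0) _ _
def comp {k : ℕ} (a b : Bool) : CF (k+2) →ₗ[ZMod 2] CF k where
  toFun x := fun δ => x (Fin.cons a (Fin.cons b δ))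
  map_add' x y := rfl
  map_smul' c x := rfl

lemma comp_apply (a b : Bool) (x : CF (k+2)) (δ : SV k) :
    comp a b x δ = x (Fin.cons a (Fin.cons b δ)) := rfl

lemma comp_ext {x y : CF (k+2)} (h : ∀ a b, comp a b x = comp a b y) : x = y := by
  funext ε
  have h2 : Fin.cons (ε 1) (Fin.tail (Fin.tail ε)) = Fin.tail ε :=
    Fin.cons_self_tail (Fin.tail ε)
  have hε : Fin.cons (ε 0) (Fin.cons (ε 1) (Fin.tail (Fin.tail ε))) = ε := by
    rw [h2, Fin.cons_self_tail]
  conv_lhs => rw [← hε]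
  conv_rhs => rw [← hε]
  exact congrFun (h (ε 0) (ε 1)) _

lemma sflip_cons_zero {m : ℕ} (a : Bool) (y : SV m) :
    sflip (0 : Fin (m+1)) (Fin.cons a y) = Fin.cons (!a) y := by
  funext l
  cases l using Fin.cases with
  | zero => simp [sflip_apply]
  | succ j => simp [sflip_apply, Fin.succ_ne_zero]

lemma sflip_cons_succ {m : ℕ} (i : Fin m) (a : Bool) (y : SV m) :
    sflip i.succ (Fin.cons a y) = Fin.cons a (sflip i y) := by
  funext l
  cases l using Fin.cases with
  | zero => simp [sflip_apply, Ne.symm (Fin.succ_ne_zero i)]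
  | succ j =>
    by_cases h : j = i
    · subst h; simp [sflip_apply]
    · simp [sflip_apply, h, fun hc => h (Fin.succ_inj.mp hc)]

lemma flipAll_cons {m : ℕ} (a : Bool) (y : SV m) :
    flipAll (Fin.cons a y) = Fin.cons (!a) (flipAll y) := by
  funext l
  cases l using Fin.cases with
  | zero => rfl
  | succ j => rfl

lemma sum_sflip_eq (y : CF k) (δ : SV k) :
    (∑ j : Fin k, y (sflip j δ)) = bdry k y δ + y (flipAll δ) := by
  rw [bdry_apply]
  exact ((by decide : ∀ s u : ZMod 2, s = s + u + u) _ _)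

lemma comp_bdry (a b : Bool) (x : CF (k+2)) :
    comp a b (bdry (k+2) x)
      = comp (!a) b x + comp a (!b) x + (bdry k (comp a b x) + eta k (comp a b x))
        + eta k (comp (!a) (!b) x) := by
  funext δ
  simp only [Pi.add_apply, comp_apply, eta_apply]
  have hrhs : bdry k (comp a b x) δ + (comp a b x) (flipAll δ)
      = ∑ j : Fin k, (comp a b x) (sflip j δ) := (sum_sflip_eq _ _).symm
  simp only [comp_apply] at hrhs
  show bdry (k+2) x (Fin.cons a (Fin.cons b δ)) = _
  rw [bdry_apply, Fin.sum_univ_succ, Fin.sum_univ_succ]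
  simp only [sflip_cons_zero, sflip_cons_succ, flipAll_cons]
  rw [hrhs]
  ring
lemma cf_add_self (x : CF k) : x + x = 0 := by
  funext ε; exact (by decide : ∀ a : ZMod 2, a + a = 0) _

lemma cf_two : (2 : CF k) = 0 := by
  funext ε; exact (by decide : (2 : ZMod 2) = 0)

lemma cf_four : (4 : CF k) = 0 := by
  funext ε; exact (by decide : (4 : ZMod 2) = 0)

example (a b c : CF k) : a + b + (b + c) + (c + a) = 0 := by
  abel_nf; simp [cf_two, cf_four]

example (a b c : CF k) : a + b + (b + c) + (c + a) + a + a = 0 := by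
  abel_nf; simp [cf_two, cf_four]

lemma cf_eq_of_add_eq_zero {x y : CF k} (h : x + y = 0) : x = y := by
  have h2 : x + y + y = y := by rw [h, zero_add]
  rw [add_assoc, cf_add_self, add_zero] at h2
  exact h2
lemma comp_pre (a b a' b' : Bool) (z : CF k) :
    comp a b (pre k a' b' z) = if a = a' ∧ b = b' then z else 0 := by
  funext δ
  show (if (Fin.cons a (Fin.cons b δ) : SV (k+2)) 0 = a' ∧
      (Fin.cons a (Fin.cons b δ) : SV (k+2)) 1 = b' then
      z (fun i => (Fin.cons a (Fin.cons b δ) : SV (k+2)) i.succ.succ) else 0)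
    = (if a = a' ∧ b = b' then z else 0) δ
  have h0 : (Fin.cons a (Fin.cons b δ) : SV (k+2)) 0 = a := rfl
  have h1 : (Fin.cons a (Fin.cons b δ) : SV (k+2)) 1 = b := rfl
  have h2 : (fun i : Fin k => (Fin.cons a (Fin.cons b δ) : SV (k+2)) i.succ.succ) = δ := by
    funext i
    show (Fin.cons a (Fin.cons b δ) : SV (k+2)) i.succ.succ = δ i
    rw [Fin.cons_succ, Fin.cons_succ]
  rw [h0, h1, h2]
  by_cases h : a = a' ∧ b = b' <;> simp [h]

def pi1 (k : ℕ) : (CF k × CF k × CF k) →ₗ[ZMod 2] CF k := LinearMap.fst _ _ _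
def pi2 (k : ℕ) : (CF k × CF k × CF k) →ₗ[ZMod 2] CF k :=
  (LinearMap.fst _ _ _).comp (LinearMap.snd _ _ _)
def pi3 (k : ℕ) : (CF k × CF k × CF k) →ₗ[ZMod 2] CF k :=
  (LinearMap.snd _ _ _).comp (LinearMap.snd _ _ _)

def Phi (k : ℕ) : (CF k × CF k × CF k) →ₗ[ZMod 2] CF (k+2) :=
  (pre k false false).comp (pi1 k)
    + (pre k false true).comp (pi2 k + (eta k).comp (pi1 k))
    + (pre k true false).comp
        ((bdry k).comp (pi1 k) + (eta k).comp (pi1 k) + (eta k).comp (pi3 k) + pi2 k)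
    + (pre k true true).comp (pi3 k + pi1 k)

lemma Phi_apply (p : CF k × CF k × CF k) :
    Phi k p = pre k false false p.1 + pre k false true (p.2.1 + eta k p.1)
    + pre k true false (bdry k p.1 + eta k p.1 + eta k p.2.2 + p.2.1)
    + pre k true true (p.2.2 + p.1) := by
  simp [Phi, pi1, pi2, pi3, LinearMap.add_apply, LinearMap.comp_apply]

lemma comp_Phi_ff (p : CF k × CF k × CF k) : comp false false (Phi k p) = p.1 := by
  rw [Phi_apply]; simp [map_add, comp_pre]

lemma comp_Phi_ft (p : CF k × CF k × CF k) :
    comp false true (Phi k p) = p.2.1 + eta k p.1 := by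
  rw [Phi_apply]; simp [map_add, comp_pre]

lemma comp_Phi_tf (p : CF k × CF k × CF k) :
    comp true false (Phi k p) = bdry k p.1 + eta k p.1 + eta k p.2.2 + p.2.1 := by
  rw [Phi_apply]; simp [map_add, comp_pre]

lemma comp_Phi_tt (p : CF k × CF k × CF k) :
    comp true true (Phi k p) = p.2.2 + p.1 := by
  rw [Phi_apply]; simp [map_add, comp_pre]

lemma Phi_mem (hk : Odd k) (p : CF k × CF k × CF k)
    (hw : bdry k p.2.1 = 0) (hP : bdry k p.2.2 = 0) :
    bdry (k+2) (Phi k p) = 0 := by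
  apply comp_ext
  intro a b
  rw [map_zero, comp_bdry]
  rcases a <;> rcases b <;>
    simp only [Bool.not_false, Bool.not_true, comp_Phi_ff, comp_Phi_ft, comp_Phi_tf,
      comp_Phi_tt, map_add, bdry_eta, eta_eta, hw, hP, bdry_bdry hk, map_zero] <;>
    abel_nf <;>
    simp [cf_two, cf_four]
section Forward
variable {x : CF (k+2)} (hx : bdry (k+2) x = 0)

lemma ycomp (a b : Bool) (hx : bdry (k+2) x = 0) :
    comp (!a) b x + comp a (!b) x + (bdry k (comp a b x) + eta k (comp a b x))
      + eta k (comp (!a) (!b) x) = 0 := by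
  rw [← comp_bdry, hx, map_zero]

lemma ker_DA (hx : bdry (k+2) x = 0) :
    bdry k (comp true true x + comp false false x) = 0 := by
  have yff := ycomp false false hx
  have ytt := ycomp true true hx
  simp only [Bool.not_false, Bool.not_true] at yff ytt
  have hsum : (comp true false x + comp false true x
        + (bdry k (comp false false x) + eta k (comp false false x))
        + eta k (comp true true x))
      + (comp false true x + comp true false x
        + (bdry k (comp true true x) + eta k (comp true true x))
        + eta k (comp false false x)) = 0 := by
    rw [yff, ytt, add_zero]
  calc bdry k (comp true true x + comp false false x)
      = (comp true false x + comp false true x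
        + (bdry k (comp false false x) + eta k (comp false false x))
        + eta k (comp true true x))
      + (comp false true x + comp true false x
        + (bdry k (comp true true x) + eta k (comp true true x))
        + eta k (comp false false x)) := by
        rw [map_add]; abel_nf; simp [cf_two, cf_four]
    _ = 0 := hsum

lemma ker_BA (hx : bdry (k+2) x = 0) :
    bdry k (comp false true x + eta k (comp false false x)) = 0 := by
  have yff := ycomp false false hx
  have yft := ycomp false true hx
  simp only [Bool.not_false, Bool.not_true] at yff yft
  have hyff : eta k (comp true false x) + eta k (comp false true x)
      + (eta k (bdry k (comp false false x)) + comp false false x)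
      + comp true true x = 0 := by
    have h := congrArg (eta k) yff
    simp only [map_add, eta_eta, map_zero] at h
    exact h
  have hsum : (eta k (comp true false x) + eta k (comp false true x)
      + (eta k (bdry k (comp false false x)) + comp false false x)
      + comp true true x)
      + (comp true true x + comp false false x
        + (bdry k (comp false true x) + eta k (comp false true x))
        + eta k (comp true false x)) = 0 := by
    have hyft : comp true true x + comp false false x
        + (bdry k (comp false true x) + eta k (comp false true x))
        + eta k (comp true false x) = 0 := by
      exact yft
    rw [hyff, hyft, add_zero]
  calc bdry k (comp false true x + eta k (comp false false x))
      = (eta k (comp true false x) + eta k (comp false true x)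
      + (eta k (bdry k (comp false false x)) + comp false false x)
      + comp true true x)
      + (comp true true x + comp false false x
        + (bdry k (comp false true x) + eta k (comp false true x))
        + eta k (comp true false x)) := by
        rw [map_add, bdry_eta]; abel_nf; simp [cf_two, cf_four]
    _ = 0 := hsum

lemma C_eq (hx : bdry (k+2) x = 0) :
    comp true false x = comp false true x + bdry k (comp false false x)
      + eta k (comp false false x) + eta k (comp true true x) := by
  have yff := ycomp false false hx
  simp only [Bool.not_false, Bool.not_true] at yff
  apply cf_eq_of_add_eq_zero
  calc comp true false x + (comp false true x + bdry k (comp false false x)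
      + eta k (comp false false x) + eta k (comp true true x))
      = comp true false x + comp false true x
        + (bdry k (comp false false x) + eta k (comp false false x))
        + eta k (comp true true x) := by abel
    _ = 0 := yff

end Forward
set_option maxHeartbeats 1000000
set_option synthInstance.maxHeartbeats 1000000
theorem stmt9 (k : ℕ) (hk : Odd k) :
    Module.finrank (ZMod 2) (LinearMap.ker (bdry (k + 2)))
      = 2 * 2 ^ k + Module.finrank (ZMod 2) (LinearMap.ker (bdry k))
        - Module.finrank (ZMod 2) (LinearMap.range (bdry k)) ∧
    Module.finrank (ZMod 2) (LinearMap.ker (bdry (k + 2)))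
      = 2 ^ (k + 2) / 2 + homDim k := by
  classical
  set K : Submodule (ZMod 2) (CF k) := LinearMap.ker (bdry k) with hKdef
  set K2 : Submodule (ZMod 2) (CF (k+2)) := LinearMap.ker (bdry (k+2)) with hK2def
  let f1 : K2 →ₗ[ZMod 2] CF k := (comp false false).comp K2.subtype
  let m2 : CF (k+2) →ₗ[ZMod 2] CF k := comp false true + (eta k).comp (comp false false)
  let m3 : CF (k+2) →ₗ[ZMod 2] CF k := comp true true + comp false false
  let f2 : K2 →ₗ[ZMod 2] K := LinearMap.codRestrict K (m2.comp K2.subtype) (fun x => by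
    rw [hKdef, LinearMap.mem_ker]
    exact ker_BA (LinearMap.mem_ker.mp x.2))
  let f3 : K2 →ₗ[ZMod 2] K := LinearMap.codRestrict K (m3.comp K2.subtype) (fun x => by
    rw [hKdef, LinearMap.mem_ker]
    exact ker_DA (LinearMap.mem_ker.mp x.2))
  let F : K2 →ₗ[ZMod 2] CF k × K × K := f1.prod (f2.prod f3)
  let G0 : (CF k × K × K) →ₗ[ZMod 2] (CF k × CF k × CF k) :=
    LinearMap.prodMap LinearMap.id (LinearMap.prodMap K.subtype K.subtype)
  let G : (CF k × K × K) →ₗ[ZMod 2] K2 :=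
    LinearMap.codRestrict K2 ((Phi k).comp G0) (fun p => by
      rw [hK2def, LinearMap.mem_ker]
      exact Phi_mem hk _ (LinearMap.mem_ker.mp p.2.1.2) (LinearMap.mem_ker.mp p.2.2.2))
  have hFG : F.comp G = LinearMap.id := by
    apply LinearMap.ext
    rintro ⟨R, w, P⟩
    refine Prod.ext ?_ (Prod.ext (Subtype.ext ?_) (Subtype.ext ?_))
    · show comp false false (Phi k (R, (w : CF k), (P : CF k))) = R
      exact comp_Phi_ff _
    · show comp false true (Phi k (R, (w : CF k), (P : CF k)))
        + eta k (comp false false (Phi k (R, (w : CF k), (P : CF k)))) = (w : CF k)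
      rw [comp_Phi_ft, comp_Phi_ff, add_assoc, cf_add_self, add_zero]
    · show comp true true (Phi k (R, (w : CF k), (P : CF k)))
        + comp false false (Phi k (R, (w : CF k), (P : CF k))) = (P : CF k)
      rw [comp_Phi_tt, comp_Phi_ff, add_assoc, cf_add_self, add_zero]
  have hGF : G.comp F = LinearMap.id := by
    apply LinearMap.ext
    rintro ⟨x, hx⟩
    have hx' : bdry (k+2) x = 0 := LinearMap.mem_ker.mp hx
    apply Subtype.ext
    show Phi k (comp false false x,
        comp false true x + eta k (comp false false x),
        comp true true x + comp false false x) = x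
    apply comp_ext
    intro a b
    rcases a <;> rcases b
    · rw [comp_Phi_ff]
    · rw [comp_Phi_ft]
      show comp false true x + eta k (comp false false x) + eta k (comp false false x) = _
      rw [add_assoc, cf_add_self, add_zero]
    · rw [comp_Phi_tf, C_eq hx']
      show bdry k (comp false false x) + eta k (comp false false x)
          + eta k (comp true true x + comp false false x)
          + (comp false true x + eta k (comp false false x)) = _
      rw [map_add]
      calc bdry k (comp false false x) + eta k (comp false false x)
          + (eta k (comp true true x) + eta k (comp false false x))
          + (comp false true x + eta k (comp false false x))
          = comp false true x + bdry k (comp false false x) + eta k (comp false false x)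
            + eta k (comp true true x)
            + (eta k (comp false false x) + eta k (comp false false x)) := by abel
        _ = comp false true x + bdry k (comp false false x) + eta k (comp false false x)
            + eta k (comp true true x) := by rw [cf_add_self, add_zero]
    · rw [comp_Phi_tt]
      show comp true true x + comp false false x + comp false false x = _
      rw [add_assoc, cf_add_self, add_zero]
  have e : K2 ≃ₗ[ZMod 2] (CF k × K × K) := LinearEquiv.ofLinear F G hFG hGF
  have hCF : Module.finrank (ZMod 2) (CF k) = 2 ^ k := by
    rw [Module.finrank_pi]
    simp [Fintype.card_fun]
  have hrank : Module.finrank (ZMod 2) K2 = 2 ^ k + (Module.finrank (ZMod 2) K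
      + Module.finrank (ZMod 2) K) := by
    rw [e.finrank_eq, Module.finrank_prod, Module.finrank_prod, hCF]
  have hrn : Module.finrank (ZMod 2) (LinearMap.range (bdry k))
      + Module.finrank (ZMod 2) K = 2 ^ k := by
    rw [hKdef, ← hCF]
    exact LinearMap.finrank_range_add_finrank_ker (bdry k)
  have hle : LinearMap.range (bdry k) ≤ K := by
    rintro y ⟨z, rfl⟩
    rw [hKdef, LinearMap.mem_ker]
    exact bdry_bdry hk z
  have hhom : homDim k + Module.finrank (ZMod 2) (LinearMap.range (bdry k))
      = Module.finrank (ZMod 2) K := by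
    have hq := Submodule.finrank_quotient_add_finrank
      (Submodule.comap K.subtype (LinearMap.range (bdry k)))
    have hcomap : Module.finrank (ZMod 2)
        (Submodule.comap K.subtype (LinearMap.range (bdry k)))
        = Module.finrank (ZMod 2) (LinearMap.range (bdry k)) :=
      (Submodule.comapSubtypeEquivOfLe hle).finrank_eq
    rw [hcomap] at hq
    exact hq
  have h4 : (2:ℕ) ^ (k + 2) = 2 * (2 * 2 ^ k) := by ring
  rw [h4, Nat.mul_div_cancel_left _ (by norm_num)]
  constructor <;> omega
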